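/- arXiv:1407.1106 — 3 statements merged into one kernel-verified Lean document; each statement's English description precedes it below -/
import Mathlib

section
/- For positive real numbers Z1, Z2, s, γ, a, α and positive integers ν, N, the integral ∫₀^∞ λ^(ν-1) · ((1 + (Z2/Z1)λ) / (1 + (Z2/Z1)(1 + a²sαγ/Z2)λ))^N · exp(-λ) dλ equals Γ(ν)/((Z2/Z1)^ν (1 + a²sαγ/Z2)^(ν+N)) · Σ_{k=0}^{N} C(N,k) (a²sαγ/Z2)^k · U(ν, ν+1-k, Z1/(Z2(1 + a²sαγ/Z2))), where U is Tricomi's confluent hypergeometric function of the second kind. -/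
open Real MeasureTheory Set

/-!
Put `c = Z2/Z1`, `d = a²sαγ/Z2` and `m = c(1+d)`. Substituting `t = m x` turns the integral into
`m^{-ν} (1+d)^{-N} ∫₀^∞ e^{-t/m} t^{ν-1} (1 + d/(1+t))^N dt`, because
`(1+d)(1+cx)/(1+mx) = 1 + d/(1+mx)`. Expanding `(1 + d/(1+t))^N` by the binomial theorem gives
a sum of integrals `∫₀^∞ e^{-t/m} t^{ν-1} (1+t)^{-k} dt = Γ(ν) U(ν, ν+1-k, 1/m)`.
-/

/-- Tricomi's confluent hypergeometric function of the second kind,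
via its integral representation (valid for `a > 0`, `z > 0`). -/
noncomputable def tricomiU (a b z : ℝ) : ℝ :=
  (1 / Real.Gamma a) * ∫ t in Set.Ioi (0:ℝ),
    Real.exp (-z * t) * t ^ (a - 1) * (1 + t) ^ (b - a - 1)

lemma tricomiU_sub_natCast (ν z : ℝ) (k : ℕ) :
    tricomiU ν (ν + 1 - k) z =
      1 / Gamma ν * ∫ t in Ioi (0:ℝ), exp (-z * t) * t ^ (ν - 1) * (1 + t) ^ (-(k:ℝ)) := by
  rw [tricomiU, show ν + 1 - k - ν - 1 = -(k:ℝ) by ring]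

lemma integrableOn_exp_mul_rpow_mul_one_add_rpow {ν z q : ℝ} (hν : 0 < ν) (hz : 0 < z)
    (hq : q ≤ 0) :
    IntegrableOn (fun t : ℝ => exp (-z * t) * t ^ (ν - 1) * (1 + t) ^ q) (Ioi 0) := by
  have hdom : IntegrableOn (fun t : ℝ => exp (-z * t) * t ^ (ν - 1)) (Ioi 0) := by
    refine (integrableOn_rpow_mul_exp_neg_mul_rpow (by linarith : -1 < ν - 1) one_pos hz
      ).congr_fun (fun t _ => ?_) measurableSet_Ioi
    dsimp only
    rw [rpow_one, mul_comm]
  refine hdom.mono' (by fun_prop) ?_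
  filter_upwards [ae_restrict_mem measurableSet_Ioi] with t (ht : 0 < t)
  have hweight : (1 + t) ^ q ≤ 1 := rpow_le_one_of_one_le_of_nonpos (by linarith) hq
  rw [norm_of_nonneg (by positivity)]
  exact mul_le_of_le_one_right (by positivity) hweight

lemma sum_choose_mul_pow_mul_one_add_rpow_neg (d : ℝ) (N : ℕ) {t : ℝ} (ht : 0 < 1 + t) :
    ∑ k ∈ Finset.range (N + 1), (N.choose k : ℝ) * d ^ k * (1 + t) ^ (-(k:ℝ)) =
      (1 + d / (1 + t)) ^ N := by
  rw [add_comm 1 (d / (1 + t)), add_pow]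
  refine Finset.sum_congr rfl fun k _ => ?_
  rw [rpow_neg ht.le, rpow_natCast, div_pow, one_pow]
  ring

lemma sum_choose_mul_pow_mul_integral_one_add_rpow_neg {f : ℝ → ℝ}
    (hf : ∀ k : ℕ, IntegrableOn (fun t => f t * (1 + t) ^ (-(k:ℝ))) (Ioi 0)) (d : ℝ)
    (N : ℕ) :
    ∑ k ∈ Finset.range (N + 1),
        (N.choose k : ℝ) * d ^ k * ∫ t in Ioi (0:ℝ), f t * (1 + t) ^ (-(k:ℝ)) =
      ∫ t in Ioi (0:ℝ), f t * (1 + d / (1 + t)) ^ N := by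
  simp_rw [← integral_const_mul]
  rw [← integral_finsetSum _ fun k _ => (hf k).const_mul _]
  refine setIntegral_congr_fun measurableSet_Ioi fun t (ht : 0 < t) => ?_
  rw [← sum_choose_mul_pow_mul_one_add_rpow_neg d N (by linarith : 0 < 1 + t), Finset.mul_sum]
  exact Finset.sum_congr rfl fun k _ => by ring

lemma integral_exp_inv_mul_rpow_mul {ν m : ℝ} (hm : 0 < m) (g : ℝ → ℝ) :
    ∫ t in Ioi (0:ℝ), exp (-m⁻¹ * t) * t ^ (ν - 1) * g t =
      m ^ ν * ∫ x in Ioi (0:ℝ), x ^ (ν - 1) * g (m * x) * exp (-x) := by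
  have hscale := integral_comp_mul_left_Ioi (fun t => exp (-m⁻¹ * t) * t ^ (ν - 1) * g t) 0 hm
  rw [mul_zero, smul_eq_mul, eq_inv_mul_iff_mul_eq₀ hm.ne'] at hscale
  rw [← hscale, ← integral_const_mul, ← integral_const_mul]
  refine setIntegral_congr_fun measurableSet_Ioi fun x (hx : 0 < x) => ?_
  rw [mul_rpow hm.le hx.le, neg_mul, inv_mul_cancel_left₀ hm.ne', rpow_sub_one hm.ne']
  field_simp

theorem integral_rpow_mul_div_pow_mul_exp_neg {c d ν : ℝ} (hc : 0 < c) (hd : 0 < 1 + d)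
    (hν : 0 < ν) (N : ℕ) :
    ∫ x in Ioi (0:ℝ), x ^ (ν - 1) * ((1 + c * x) / (1 + c * (1 + d) * x)) ^ N * exp (-x) =
      Gamma ν / (c ^ ν * (1 + d) ^ (ν + N)) *
        ∑ k ∈ Finset.range (N + 1),
          (N.choose k : ℝ) * d ^ k * tricomiU ν (ν + 1 - k) (c * (1 + d))⁻¹ := by
  set m := c * (1 + d) with hm_def
  have hm : 0 < m := mul_pos hc hd
  set I := ∫ x in Ioi (0:ℝ), x ^ (ν - 1) * ((1 + c * x) / (1 + m * x)) ^ N * exp (-x) with hI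
  have hfrac (x : ℝ) (hx : 0 < x) :
      1 + d / (1 + m * x) = (1 + d) * ((1 + c * x) / (1 + m * x)) := by
    have : 0 < 1 + m * x := by positivity
    field_simp
    ring
  have hsum :
      ∑ k ∈ Finset.range (N + 1), (N.choose k : ℝ) * d ^ k * tricomiU ν (ν + 1 - k) m⁻¹ =
      1 / Gamma ν * (m ^ ν * ((1 + d) ^ N * I)) := by
    calc _ = 1 / Gamma ν * ∑ k ∈ Finset.range (N + 1), (N.choose k : ℝ) * d ^ k *
          ∫ t in Ioi (0:ℝ), exp (-m⁻¹ * t) * t ^ (ν - 1) * (1 + t) ^ (-(k:ℝ)) := by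
          simp_rw [tricomiU_sub_natCast, Finset.mul_sum]
          exact Finset.sum_congr rfl fun k _ => by ring
      _ = 1 / Gamma ν *
            ∫ t in Ioi (0:ℝ), exp (-m⁻¹ * t) * t ^ (ν - 1) * (1 + d / (1 + t)) ^ N := by
          rw [sum_choose_mul_pow_mul_integral_one_add_rpow_neg fun k =>
            integrableOn_exp_mul_rpow_mul_one_add_rpow hν (inv_pos.2 hm) (by simp)]
      _ = 1 / Gamma ν *
            (m ^ ν * ∫ x in Ioi (0:ℝ), x ^ (ν - 1) * (1 + d / (1 + m * x)) ^ N * exp (-x)) :=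
          congr_arg (1 / Gamma ν * ·)
            (integral_exp_inv_mul_rpow_mul hm fun t => (1 + d / (1 + t)) ^ N)
      _ = _ := by
          rw [hI, ← integral_const_mul ((1 + d) ^ N)]
          congr 2
          refine setIntegral_congr_fun measurableSet_Ioi fun x (hx : 0 < x) => ?_
          rw [hfrac x hx, mul_pow]
          ring
  have hΓ := Gamma_pos_of_pos hν
  have hcν := rpow_pos_of_pos hc ν
  have hdν := rpow_pos_of_pos hd ν
  rw [hsum, hm_def, mul_rpow hc.le hd.le, rpow_add hd, rpow_natCast]
  field_simp

theorem stmt0_general (Z1 Z2 s γ a α : ℝ) (hZ1 : 0 < Z1) (hZ2 : 0 < Z2) (hs : 0 < s)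
    (hγ : 0 < γ) (hα : 0 < α) (ν N : ℕ) (hν : 0 < ν) :
    (∫ x in Set.Ioi (0:ℝ), x ^ ((ν:ℝ) - 1) *
        ((1 + (Z2 / Z1) * x) / (1 + (Z2 / Z1) * (1 + a^2 * s * α * γ / Z2) * x)) ^ N *
        Real.exp (-x)) =
      Real.Gamma ν / ((Z2 / Z1) ^ (ν:ℕ) * (1 + a^2 * s * α * γ / Z2) ^ ((ν:ℝ) + N)) *
        ∑ k ∈ Finset.range (N + 1), (N.choose k : ℝ) * (a^2 * s * α * γ / Z2) ^ k *
          tricomiU ν ((ν:ℝ) + 1 - k) (Z1 / (Z2 * (1 + a^2 * s * α * γ / Z2))) := by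
  have hd : 0 < 1 + a ^ 2 * s * α * γ / Z2 := by positivity
  have hz : Z1 / (Z2 * (1 + a ^ 2 * s * α * γ / Z2)) =
      (Z2 / Z1 * (1 + a ^ 2 * s * α * γ / Z2))⁻¹ := by
    field_simp
  rw [integral_rpow_mul_div_pow_mul_exp_neg (div_pos hZ2 hZ1) hd (Nat.cast_pos.2 hν), hz,
    rpow_natCast]

theorem stmt0 (Z1 Z2 s γ a α : ℝ) (hZ1 : 0 < Z1) (hZ2 : 0 < Z2) (hs : 0 < s)
    (hγ : 0 < γ) (ha : 0 < a) (hα : 0 < α) (ν N : ℕ) (hν : 0 < ν) (hN : 0 < N) :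
    (∫ x in Set.Ioi (0:ℝ), x ^ ((ν:ℝ) - 1) *
        ((1 + (Z2 / Z1) * x) / (1 + (Z2 / Z1) * (1 + a^2 * s * α * γ / Z2) * x)) ^ N *
        Real.exp (-x)) =
      Real.Gamma ν / ((Z2 / Z1) ^ (ν:ℕ) * (1 + a^2 * s * α * γ / Z2) ^ ((ν:ℝ) + N)) *
        ∑ k ∈ Finset.range (N + 1), (N.choose k : ℝ) * (a^2 * s * α * γ / Z2) ^ k *
          tricomiU ν ((ν:ℝ) + 1 - k) (Z1 / (Z2 * (1 + a^2 * s * α * γ / Z2))) :=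
  stmt0_general Z1 Z2 s γ a α hZ1 hZ2 hs hγ hα ν N hν
end

section
/- For a positive real γ̄ and positive integer N, (1/π)∫₀^{π/2} (1 + γ̄/sin²θ)^{-N} dθ = (1/π)∫₀^{π/2} (sin²θ/(sin²θ+γ̄))^N dθ = (1/2)[1 - √(γ̄/(1+γ̄)) Σ_{k=0}^{N-1} C(2k,k)/(4^k (1+γ̄)^k)]. -/
open Real MeasureTheory intervalIntegral Filter

lemma cont_g (γ : ℝ) (hγ : 0 < γ) (M N : ℕ) :
    Continuous fun θ : ℝ => Real.sin θ ^ M / (Real.sin θ ^ 2 + γ) ^ N := by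
  apply Continuous.div (by fun_prop) (by fun_prop)
  intro θ; positivity

lemma K0 (γ : ℝ) (hγ : 0 < γ) :
    ∫ θ in (0:ℝ)..(π/2), 1 / (Real.sin θ ^ 2 + γ)
      = π / (2 * Real.sqrt (γ * (1 + γ))) := by
  have hγγ : (0:ℝ) < γ * (1 + γ) := by nlinarith
  set s := Real.sqrt (γ * (1 + γ)) with hs
  have hs0 : 0 < s := Real.sqrt_pos.2 hγγ
  have hsa : s ^ 2 = γ * (1 + γ) := Real.sq_sqrt hγγ.le
  set a := s / γ with ha
  have ha0 : 0 < a := by positivity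
  -- integral up to b < π/2
  have key : ∀ b ∈ Set.Ico (0:ℝ) (π/2),
      ∫ θ in (0:ℝ)..b, 1 / (Real.sin θ ^ 2 + γ) = s⁻¹ * Real.arctan (a * Real.tan b) := by
    intro b hb
    have hF : ∀ θ ∈ Set.uIcc (0:ℝ) b,
        HasDerivAt (fun x => s⁻¹ * Real.arctan (a * Real.tan x)) (1 / (Real.sin θ ^ 2 + γ)) θ := by
      intro θ hθ
      rw [Set.uIcc_of_le hb.1] at hθ
      have hcos : 0 < Real.cos θ := Real.cos_pos_of_mem_Ioo
        ⟨by linarith [hθ.1, Real.pi_pos], lt_of_le_of_lt hθ.2 hb.2⟩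
      have h1 : HasDerivAt (fun x => a * Real.tan x) (a * (1 / Real.cos θ ^ 2)) θ :=
        (Real.hasDerivAt_tan hcos.ne').const_mul a
      have h2 := (Real.hasDerivAt_arctan (a * Real.tan θ)).comp θ h1
      have h3 := h2.const_mul s⁻¹
      refine h3.congr_deriv ?_
      symm
      have ht : Real.tan θ = Real.sin θ / Real.cos θ := Real.tan_eq_sin_div_cos θ
      have hsc : Real.sin θ ^ 2 + Real.cos θ ^ 2 = 1 := Real.sin_sq_add_cos_sq θ
      have h4 : Real.sin θ ^ 2 + γ ≠ 0 := by positivity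
      rw [ht, ha]
      field_simp
      linear_combination Real.sin θ ^ 2 * hsa + γ^2 * hsc
    have hint : IntervalIntegrable (fun θ => 1 / (Real.sin θ ^ 2 + γ)) volume 0 b := by
      have := cont_g γ hγ 0 1
      simpa using this.intervalIntegrable 0 b
    rw [intervalIntegral.integral_eq_sub_of_hasDerivAt hF hint]
    simp
  have hcont : Continuous (fun b => ∫ θ in (0:ℝ)..b, 1 / (Real.sin θ ^ 2 + γ)) := by
    apply intervalIntegral.continuous_primitive
    intro x y
    have := cont_g γ hγ 0 1
    simpa using this.intervalIntegrable x y
  have h1 : Tendsto (fun b => ∫ θ in (0:ℝ)..b, 1 / (Real.sin θ ^ 2 + γ)) (nhdsWithin (π/2) (Set.Iio (π/2)))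
      (nhds (∫ θ in (0:ℝ)..(π/2), 1 / (Real.sin θ ^ 2 + γ))) :=
    (hcont.tendsto _).mono_left nhdsWithin_le_nhds
  have h2 : Tendsto (fun b => s⁻¹ * Real.arctan (a * Real.tan b)) (nhdsWithin (π/2) (Set.Iio (π/2)))
      (nhds (s⁻¹ * (π/2))) := by
    have htan : Tendsto Real.tan (nhdsWithin (π/2) (Set.Iio (π/2))) atTop := Real.tendsto_tan_pi_div_two
    have hmul : Tendsto (fun b => a * Real.tan b) (nhdsWithin (π/2) (Set.Iio (π/2))) atTop :=
      htan.const_mul_atTop ha0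
    have harc : Tendsto Real.arctan atTop (nhds (π/2)) :=
      Real.tendsto_arctan_atTop.mono_right nhdsWithin_le_nhds
    exact (harc.comp hmul).const_mul _
  have h3 : Tendsto (fun b => ∫ θ in (0:ℝ)..b, 1 / (Real.sin θ ^ 2 + γ))
      (nhdsWithin (π/2) (Set.Iio (π/2))) (nhds (s⁻¹ * (π/2))) := by
    refine h2.congr' ?_
    filter_upwards [Ioo_mem_nhdsLT_of_mem (Set.mem_Ioc.2 ⟨by positivity, le_refl _⟩)] with b hb
    exact (key b ⟨hb.1.le, hb.2⟩).symm
  have h4 := tendsto_nhds_unique h1 h3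
  rw [h4]; field_simp

lemma Krec (γ : ℝ) (hγ : 0 < γ) (N : ℕ) :
    (2*(N:ℝ)+2) * (1+γ) * ∫ θ in (0:ℝ)..(π/2), Real.sin θ^(2*N+2) / (Real.sin θ^2+γ)^(N+2)
      = (2*(N:ℝ)+1) * ∫ θ in (0:ℝ)..(π/2), Real.sin θ^(2*N) / (Real.sin θ^2+γ)^(N+1) := by
  set f : ℝ → ℝ := fun θ =>
    (2*(N:ℝ)+1) * (Real.sin θ^(2*N) / (Real.sin θ^2+γ)^(N+1))
      - (2*(N:ℝ)+2) * (1+γ) * (Real.sin θ^(2*N+2) / (Real.sin θ^2+γ)^(N+2)) with hf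
  have hF : ∀ θ ∈ Set.uIcc (0:ℝ) (π/2),
      HasDerivAt (fun x => Real.cos x * Real.sin x ^ (2*N+1) / (Real.sin x^2+γ)^(N+1)) (f θ) θ := by
    intro θ _
    have hden : (0:ℝ) < Real.sin θ ^ 2 + γ := by positivity
    have hu : HasDerivAt (fun x => Real.cos x * Real.sin x ^ (2*N+1))
        (-Real.sin θ * Real.sin θ ^ (2*N+1)
          + Real.cos θ * ((2*N+1 : ℕ) * Real.sin θ ^ (2*N+1-1) * Real.cos θ)) θ :=
      (Real.hasDerivAt_cos θ).mul ((Real.hasDerivAt_sin θ).pow (2*N+1))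
    have hv : HasDerivAt (fun x => (Real.sin x^2+γ)^(N+1))
        ((N+1 : ℕ) * (Real.sin θ^2+γ)^(N+1-1) * ((2:ℕ) * Real.sin θ ^ (2-1) * Real.cos θ)) θ :=
      (((Real.hasDerivAt_sin θ).pow 2).add_const γ).pow (N+1)
    have h := hu.div hv (by positivity)
    refine h.congr_deriv ?_
    symm
    have hsc : Real.sin θ ^ 2 + Real.cos θ ^ 2 = 1 := Real.sin_sq_add_cos_sq θ
    have h4 : Real.sin θ ^ 2 + γ ≠ 0 := hden.ne'
    rw [hf]
    have hBne : (Real.sin θ^2+γ)^N ≠ 0 := by positivity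
    simp only [Nat.add_sub_cancel, Nat.cast_add, Nat.cast_mul, Nat.cast_ofNat, Nat.cast_one,
      pow_one]
    set S := Real.sin θ with hS
    set C := Real.cos θ with hC
    set B := (S^2+γ)^N with hB
    set T := S^(2*N) with hT
    have e1 : (S^2+γ)^(N+1) = B*(S^2+γ) := by rw [hB, pow_succ]
    have e2 : (S^2+γ)^(N+2) = B*(S^2+γ)^2 := by rw [hB, ← pow_add]
    have e3 : S^(2*N+1) = T*S := by rw [hT, pow_succ]
    have e4 : S^(2*N+2) = T*S^2 := by rw [hT, ← pow_add]
    clear_value S C B T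
    rw [e1, e2, e3, e4]
    field_simp
    linear_combination (-2*T*(N:ℝ)*γ + T*S^2 - T*γ) * hsc
  have hint : IntervalIntegrable f volume 0 (π/2) := by
    apply IntervalIntegrable.sub
    · exact ((continuous_const.mul (cont_g γ hγ (2*N) (N+1)))).intervalIntegrable 0 (π/2)
    · exact ((continuous_const.mul (cont_g γ hγ (2*N+2) (N+2)))).intervalIntegrable 0 (π/2)
  have h0 := intervalIntegral.integral_eq_sub_of_hasDerivAt hF hint
  rw [Real.cos_pi_div_two] at h0
  simp only [Real.sin_zero, zero_mul, mul_zero, zero_pow (by omega : 2*N+1 ≠ 0), zero_div, sub_zero,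
    zero_mul, zero_div] at h0
  rw [hf] at h0
  rw [intervalIntegral.integral_sub
        (((cont_g γ hγ (2*N) (N+1)).const_mul _).intervalIntegrable 0 (π/2))
        (((cont_g γ hγ (2*N+2) (N+2)).const_mul _).intervalIntegrable 0 (π/2)),
      intervalIntegral.integral_const_mul, intervalIntegral.integral_const_mul] at h0
  linarith [h0]

lemma Kval (γ : ℝ) (hγ : 0 < γ) (N : ℕ) :
    ∫ θ in (0:ℝ)..(π/2), Real.sin θ^(2*N) / (Real.sin θ^2+γ)^(N+1)
      = π * ((2*N).choose N : ℝ) / (2 * 4^N * Real.sqrt (γ*(1+γ)) * (1+γ)^N) := by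
  have hγγ : (0:ℝ) < γ * (1 + γ) := by nlinarith
  have hs0 : 0 < Real.sqrt (γ * (1 + γ)) := Real.sqrt_pos.2 hγγ
  induction N with
  | zero => simpa using K0 γ hγ
  | succ n ih =>
    have hrec := Krec γ hγ n
    rw [ih] at hrec
    have h2n : 2*(n+1) = 2*n+2 := by ring
    have h2n' : n+1+1 = n+2 := rfl
    rw [h2n, h2n']
    have hcb : ((n:ℝ)+1) * ((2*n+2).choose (n+1) : ℝ) = 2*(2*(n:ℝ)+1) * ((2*n).choose n : ℝ) := by
      have h := Nat.succ_mul_centralBinom_succ n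
      rw [Nat.centralBinom, Nat.centralBinom, show 2*(n+1)=2*n+2 by ring] at h
      exact_mod_cast h
    have hne : (2*(n:ℝ)+2) * (1+γ) ≠ 0 := by positivity
    have h1γ : (0:ℝ) < 1 + γ := by linarith
    set s := Real.sqrt (γ*(1+γ)) with hsdef
    clear_value s
    apply mul_left_cancel₀ hne
    rw [hrec]
    field_simp
    linear_combination (-2*(1+γ)^(n+1)*(4:ℝ)^n) * hcb

lemma Ival (γ : ℝ) (hγ : 0 < γ) (N : ℕ) :
    ∫ θ in (0:ℝ)..(π/2), (Real.sin θ^2 / (Real.sin θ^2+γ))^N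
      = π/2 * (1 - Real.sqrt (γ/(1+γ)) *
          ∑ k ∈ Finset.range N, ((2*k).choose k : ℝ) / (4^k * (1+γ)^k)) := by
  have h1γ : (0:ℝ) < 1 + γ := by linarith
  have hγγ : (0:ℝ) < γ * (1 + γ) := by nlinarith
  have hs0 : 0 < Real.sqrt (γ * (1 + γ)) := Real.sqrt_pos.2 hγγ
  have hkey : Real.sqrt (γ/(1+γ)) * Real.sqrt (γ*(1+γ)) = γ := by
    rw [← Real.sqrt_mul (by positivity)]
    rw [show γ/(1+γ)*(γ*(1+γ)) = γ^2 by field_simp, Real.sqrt_sq hγ.le]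
  induction N with
  | zero => simp
  | succ n ih =>
    have hpt : Set.EqOn (fun θ => (Real.sin θ^2/(Real.sin θ^2+γ))^(n+1))
        (fun θ => (Real.sin θ^2/(Real.sin θ^2+γ))^n
          - γ * (Real.sin θ^(2*n)/(Real.sin θ^2+γ)^(n+1))) (Set.uIcc 0 (π/2)) := by
      intro θ _
      have h4 : Real.sin θ^2+γ ≠ 0 := by positivity
      simp only [div_pow, pow_mul]
      field_simp
      ring
    have hc1 : Continuous fun θ : ℝ => (Real.sin θ^2/(Real.sin θ^2+γ))^n := by
      apply Continuous.pow
      apply Continuous.div (by fun_prop) (by fun_prop)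
      intro θ; positivity
    rw [intervalIntegral.integral_congr hpt,
        intervalIntegral.integral_sub (hc1.intervalIntegrable 0 (π/2))
          (((cont_g γ hγ (2*n) (n+1)).const_mul _).intervalIntegrable 0 (π/2)),
        intervalIntegral.integral_const_mul, ih, Kval γ hγ n, Finset.sum_range_succ]
    set s := Real.sqrt (γ*(1+γ))
    set t := Real.sqrt (γ/(1+γ))
    field_simp
    linear_combination ((2*n).choose n : ℝ) * hkey

/-- Simon–Alouini closed form for BPSK with MRC over `N` i.i.d. Rayleigh branches. -/
theorem stmt3 (γ : ℝ) (hγ : 0 < γ) (N : ℕ) (hN : 0 < N) :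
    (1 / π) * ∫ θ in (0:ℝ)..(π / 2), ((Real.sin θ)^2 / ((Real.sin θ)^2 + γ)) ^ N =
      (1 / 2) * (1 - Real.sqrt (γ / (1 + γ)) *
        ∑ k ∈ Finset.range N, ((2 * k).choose k : ℝ) / (4 ^ k * (1 + γ) ^ k)) := by
  rw [Ival γ hγ N]
  field_simp
end

section
/- For z → 0⁺ and fixed a > 0, the confluent hypergeometric function of the second kind satisfies: U(a,b,z) ~ (Γ(b-1)/Γ(a)) z^{1-b} if b ≥ 2 (integer); U(a,1,z) ~ -(1/Γ(a))(ln z + ψ(a)) where ψ is the digamma function; and U(a,b,z) → Γ(1-b)/Γ(1+a-b) if b ≤ 0 (integer). In particular, for integer b ≤ 0, lim_{z→0⁺} U(a,b,z) = Γ(1-b)/Γ(1+a-b). -/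
/-!
The substitution `t = x / (1 - x)` turns `∫₀^∞ t^(a-1) (1+t)^(b-a-1) dt` into Euler's Beta
integral `B(a, 1 - b) = Γ(a) Γ(1-b) / Γ(1+a-b)`, which converges because `1 - b > 0`. Since
`e^(-z t) ≤ 1` for `z, t ≥ 0`, this integrand also dominates the one defining `U(a, b, z)`, and
dominated convergence lets `z → 0⁺` under the integral sign.
-/

open Real Filter Set MeasureTheory

open scoped Topology

lemma Complex.ofReal_rpow_mul_one_sub_rpow (u v : ℝ) {x : ℝ} (hx : x ∈ Icc (0 : ℝ) 1) :
    ((x ^ (u - 1) * (1 - x) ^ (v - 1) : ℝ) : ℂ) =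
      (x : ℂ) ^ ((u : ℂ) - 1) * (1 - (x : ℂ)) ^ ((v : ℂ) - 1) := by
  push_cast
  rw [Complex.ofReal_cpow hx.1, Complex.ofReal_cpow (sub_nonneg.2 hx.2)]
  push_cast
  rfl

lemma integrableOn_rpow_mul_one_sub_rpow {u v : ℝ} (hu : 0 < u) (hv : 0 < v) :
    IntegrableOn (fun x : ℝ => x ^ (u - 1) * (1 - x) ^ (v - 1)) (Ioo 0 1) := by
  have hC : IntegrableOn (fun x : ℝ => _) (Ioo (0 : ℝ) 1) := Integrable.re <|
    (Complex.betaIntegral_convergent (u := u) (v := v) (by simpa) (by simpa)).1.mono_set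
      Ioo_subset_Ioc_self
  refine hC.congr_fun (fun x hx => ?_) measurableSet_Ioo
  simp only [RCLike.re_to_complex]
  rw [← Complex.ofReal_rpow_mul_one_sub_rpow u v (Ioo_subset_Icc_self hx), Complex.ofReal_re]

lemma integral_Ioo_rpow_mul_one_sub_rpow {u v : ℝ} (hu : 0 < u) (hv : 0 < v) :
    ∫ x in Ioo (0 : ℝ) 1, x ^ (u - 1) * (1 - x) ^ (v - 1)
      = Gamma u * Gamma v / Gamma (u + v) := by
  have hB := Complex.betaIntegral_eq_Gamma_mul_div u v (by simpa) (by simpa)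
  rw [Complex.betaIntegral, intervalIntegral.integral_of_le zero_le_one,
    integral_Ioc_eq_integral_Ioo,
    setIntegral_congr_fun measurableSet_Ioo
      (fun x hx => (Complex.ofReal_rpow_mul_one_sub_rpow u v (Ioo_subset_Icc_self hx)).symm),
    integral_complex_ofReal, ← Complex.ofReal_add, Complex.Gamma_ofReal, Complex.Gamma_ofReal,
    Complex.Gamma_ofReal] at hB
  exact_mod_cast hB

lemma hasDerivAt_div_one_sub {x : ℝ} (hx : x ≠ 1) :
    HasDerivAt (fun x : ℝ => x / (1 - x)) ((1 - x) ^ 2)⁻¹ x := by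
  have h1x : 1 - x ≠ 0 := sub_ne_zero.2 hx.symm
  refine ((hasDerivAt_id x).div ((hasDerivAt_const x 1).sub (hasDerivAt_id x)) h1x).congr_deriv
    ?_
  simp

lemma image_div_one_sub_Ioo : (fun x : ℝ => x / (1 - x)) '' Ioo 0 1 = Ioi 0 := by
  ext t
  constructor
  · rintro ⟨x, hx, rfl⟩
    exact div_pos hx.1 (sub_pos.2 hx.2)
  · intro ht
    have h1t : 0 < 1 + t := by linarith [mem_Ioi.1 ht]
    refine ⟨t / (1 + t), ⟨div_pos ht h1t, (div_lt_one h1t).2 (by linarith)⟩, ?_⟩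
    field_simp
    ring

lemma injOn_div_one_sub_Ioo : InjOn (fun x : ℝ => x / (1 - x)) (Ioo 0 1) := by
  intro x hx y hy hxy
  have h1x : 1 - x ≠ 0 := (sub_pos.2 hx.2).ne'
  have h1y : 1 - y ≠ 0 := (sub_pos.2 hy.2).ne'
  field_simp at hxy
  linarith

lemma abs_inv_one_sub_sq_smul_rpow_div_one_sub (u v : ℝ) {x : ℝ} (hx : x ∈ Ioo (0 : ℝ) 1) :
    |((1 - x) ^ 2)⁻¹| • ((x / (1 - x)) ^ (u - 1) * (1 + x / (1 - x)) ^ (-(u + v)))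
      = x ^ (u - 1) * (1 - x) ^ (v - 1) := by
  have hx0 : 0 < x := hx.1
  have h1x : 0 < 1 - x := sub_pos.2 hx.2
  have hsum : 1 + x / (1 - x) = (1 - x)⁻¹ := by field_simp; ring
  have hsq : ((1 - x) ^ 2)⁻¹ = (1 - x) ^ (-2 : ℝ) := by
    rw [Real.rpow_neg h1x.le, ← Real.rpow_natCast]
    norm_num
  rw [smul_eq_mul, abs_of_pos (by positivity), hsum, hsq, Real.div_rpow hx0.le h1x.le,
    Real.inv_rpow h1x.le, ← Real.rpow_neg h1x.le, div_eq_mul_inv, ← Real.rpow_neg h1x.le,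
    mul_comm ((1 - x) ^ (-2 : ℝ)), mul_assoc, mul_assoc, ← Real.rpow_add h1x,
    ← Real.rpow_add h1x]
  ring_nf

lemma integrableOn_rpow_mul_one_add_rpow {u v : ℝ} (hu : 0 < u) (hv : 0 < v) :
    IntegrableOn (fun t : ℝ => t ^ (u - 1) * (1 + t) ^ (-(u + v))) (Ioi 0) := by
  rw [← image_div_one_sub_Ioo,
    integrableOn_image_iff_integrableOn_abs_deriv_smul measurableSet_Ioo
      (fun x hx => (hasDerivAt_div_one_sub hx.2.ne).hasDerivWithinAt) injOn_div_one_sub_Ioo]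
  exact (integrableOn_rpow_mul_one_sub_rpow hu hv).congr_fun
    (fun x hx => (abs_inv_one_sub_sq_smul_rpow_div_one_sub u v hx).symm) measurableSet_Ioo

lemma integral_Ioi_rpow_mul_one_add_rpow {u v : ℝ} (hu : 0 < u) (hv : 0 < v) :
    ∫ t in Ioi (0 : ℝ), t ^ (u - 1) * (1 + t) ^ (-(u + v))
      = Gamma u * Gamma v / Gamma (u + v) := by
  rw [← image_div_one_sub_Ioo,
    integral_image_eq_integral_abs_deriv_smul measurableSet_Ioo
      (fun x hx => (hasDerivAt_div_one_sub hx.2.ne).hasDerivWithinAt) injOn_div_one_sub_Ioo,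
    setIntegral_congr_fun measurableSet_Ioo
      (fun x hx => abs_inv_one_sub_sq_smul_rpow_div_one_sub u v hx)]
  exact integral_Ioo_rpow_mul_one_sub_rpow hu hv

theorem tendsto_integral_Ioi_exp_neg_mul_smul {E : Type*} [NormedAddCommGroup E]
    [NormedSpace ℝ E] {f : ℝ → E} (hf : IntegrableOn f (Ioi 0)) :
    Tendsto (fun z : ℝ => ∫ t in Ioi 0, exp (-z * t) • f t) (𝓝[≥] 0)
      (𝓝 (∫ t in Ioi 0, f t)) := by
  refine tendsto_integral_filter_of_dominated_convergence (‖f ·‖) ?_ ?_ hf.norm ?_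
  · exact .of_forall fun z =>
      (by fun_prop : Continuous fun t => exp (-z * t)).aestronglyMeasurable.smul
        hf.aestronglyMeasurable
  · filter_upwards [self_mem_nhdsWithin] with z (hz : 0 ≤ z)
    refine (ae_restrict_iff' measurableSet_Ioi).2 (.of_forall fun t (ht : 0 < t) => ?_)
    rw [norm_smul, Real.norm_of_nonneg (exp_pos _).le]
    refine mul_le_of_le_one_left (norm_nonneg _) (exp_le_one_iff.2 ?_)
    nlinarith
  · refine .of_forall fun t => tendsto_nhdsWithin_of_tendsto_nhds ?_
    simpa using ((by fun_prop : Continuous fun z : ℝ => exp (-z * t)).tendsto 0).smul_const (f t)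

/-- Abramowitz–Stegun 13.5.12: for integer `b ≤ 0` and `a > 0`,
`U(a,b,z) → Γ(1-b)/Γ(1+a-b)` as `z → 0⁺`. -/
theorem stmt7 (a : ℝ) (ha : 0 < a) (b : ℤ) (hb : b ≤ 0) :
    Filter.Tendsto (fun z : ℝ => tricomiU a (b : ℝ) z)
      (nhdsWithin 0 (Set.Ioi 0))
      (nhds (Real.Gamma (1 - (b : ℝ)) / Real.Gamma (1 + a - (b : ℝ)))) := by
  have hv : 0 < 1 - (b : ℝ) := sub_pos.2 ((Int.cast_nonpos.2 hb).trans_lt zero_lt_one)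
  have hexp : (b : ℝ) - a - 1 = -(a + (1 - b)) := by ring
  have hlim := ((tendsto_integral_Ioi_exp_neg_mul_smul
    (integrableOn_rpow_mul_one_add_rpow ha hv)).mono_left
      (nhdsWithin_mono 0 Ioi_subset_Ici_self)).const_mul (1 / Gamma a)
  simp only [smul_eq_mul, integral_Ioi_rpow_mul_one_add_rpow ha hv] at hlim
  convert hlim using 2 with z
  · simp only [tricomiU, hexp, mul_assoc]
  · have hGa : Gamma a ≠ 0 := (Gamma_pos_of_pos ha).ne'
    rw [show a + (1 - b) = 1 + a - b by ring]
    field_simp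
end
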